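/- Let (d_{n,k}) = (g; f_1,…,f_ℓ) be a multiple Riordan array and h an ℓ-th root of f_1⋯f_ℓ. There exists a unique A = Σ_{j≥0} a_j t^{ℓj} ∈ K[[t]] supported on exponents divisible by ℓ such that t^ℓ·A(h) = h^ℓ (equivalently A(t) = t^ℓ/h̄(t)^ℓ, where h̄ is the compositional inverse of h). For this A-sequence (a_j), one has d_{n,k} = Σ_{j=0}^{n} a_j d_{n−ℓ, k+(j−1)ℓ} for all n ≥ ℓ and k ≥ ℓ (terms whose column index exceeds the row index are zero). -/

import Mathlib

/-!
Write `A = ∑ aⱼ t^{ℓj}`. As `h` lives on exponents `≡ 1 (mod ℓ)`, both sides of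
`t^ℓ A(h) = h^ℓ` live on multiples of `ℓ`, and comparing the coefficients of `t^{ℓ(s+1)}` gives
the infinite lower triangular system `∑_{j ≤ s} aⱼ [t^{ℓs}] h^{ℓj} = [t^{ℓ(s+1)}] h^ℓ`, whose
diagonal `h_0^{ℓs}` is nonzero; so `A` exists and is unique.

For the recurrence, let `C_k` be the generating function of column `k`. Then
`C_{k+jℓ} = C_k (f_0⋯f_{ℓ-1})^j = C_k h^{ℓj}`; in particular `C_k = C_{k-ℓ} t^ℓ A(h)` for
`k ≥ ℓ`, so `d_{n,k} = [t^{n-ℓ}] C_{k-ℓ} A(h) = ∑ⱼ aⱼ [t^{n-ℓ}] C_{k-ℓ} h^{ℓj}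
= ∑ⱼ aⱼ d_{n-ℓ, k-ℓ+jℓ}`.
-/

open PowerSeries Finset

/-- Formal substitution `F(u)`: for `u` with zero constant term, the `n`-th coefficient of
`F(u)` is `∑_{k ≤ n} F_k · [t^n] u^k`. -/
noncomputable def psComp {K : Type*} [CommRing K] (F u : K⟦X⟧) : K⟦X⟧ :=
  PowerSeries.mk fun n => ∑ k ∈ Finset.range (n + 1), coeff k F * coeff n (u ^ k)

/-- Entry `d_{n,k}` of the multiple Riordan array `(g; f_0, …, f_{ℓ-1})`: the `k`-th column,
`k = qℓ + m`, has generating function `g · f_0⋯f_{m-1} · (f_0⋯f_{ℓ-1})^q`. -/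
noncomputable def mrEntry {K : Type*} [CommRing K] (ℓ : ℕ) (g : K⟦X⟧) (f : ℕ → K⟦X⟧)
    (n k : ℕ) : K :=
  coeff n (g * (∏ i ∈ Finset.range (k % ℓ), f i) * (∏ i ∈ Finset.range ℓ, f i) ^ (k / ℓ))

section PowerSeries

variable {R : Type*} [CommRing R]

lemma coeff_mul_pow_of_lt {h : R⟦X⟧} (hh : constantCoeff h = 0) (G : R⟦X⟧) {m k : ℕ}
    (hmk : m < k) : coeff m (G * h ^ k) = 0 := by
  obtain ⟨u, rfl⟩ := X_dvd_iff.mpr hh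
  rw [mul_pow, mul_left_comm, coeff_X_pow_mul', if_neg hmk.not_ge]

lemma coeff_pow_self_of_constantCoeff_eq_zero {h : R⟦X⟧} (hh : constantCoeff h = 0) (k : ℕ) :
    coeff k (h ^ k) = coeff 1 h ^ k := by
  obtain ⟨u, rfl⟩ := X_dvd_iff.mpr hh
  rw [mul_pow, coeff_X_pow_mul', if_pos le_rfl, Nat.sub_self, coeff_zero_eq_constantCoeff,
    map_pow, show coeff 1 (X * u) = constantCoeff u by simp]

def SupportedMod (ℓ r : ℕ) (F : R⟦X⟧) : Prop :=
  ∀ n, ¬ n ≡ r [MOD ℓ] → coeff n F = 0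

lemma supportedMod_zero_iff {ℓ : ℕ} {F : R⟦X⟧} :
    SupportedMod ℓ 0 F ↔ ∀ n, ¬ ℓ ∣ n → coeff n F = 0 := by
  simp only [SupportedMod, Nat.modEq_zero_iff_dvd]

namespace SupportedMod

variable {ℓ : ℕ}

lemma one : SupportedMod ℓ 0 (1 : R⟦X⟧) := by
  intro n hn
  rw [coeff_one, if_neg]
  rintro rfl
  exact hn rfl

lemma mul {a b : ℕ} {F G : R⟦X⟧} (hF : SupportedMod ℓ a F) (hG : SupportedMod ℓ b G) :
    SupportedMod ℓ (a + b) (F * G) := by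
  intro n hn
  rw [coeff_mul]
  refine sum_eq_zero fun p hp => ?_
  by_cases hpa : p.1 ≡ a [MOD ℓ]
  · by_cases hpb : p.2 ≡ b [MOD ℓ]
    · exact absurd (mem_antidiagonal.mp hp ▸ hpa.add hpb) hn
    · rw [hG _ hpb, mul_zero]
  · rw [hF _ hpa, zero_mul]

lemma pow {a : ℕ} {F : R⟦X⟧} (hF : SupportedMod ℓ a F) (k : ℕ) :
    SupportedMod ℓ (a * k) (F ^ k) := by
  induction k with
  | zero => simpa using one
  | succ k ih => simpa [mul_add, pow_succ] using ih.mul hF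

lemma X_pow (k : ℕ) : SupportedMod ℓ k (X ^ k : R⟦X⟧) := by
  intro n hn
  rw [coeff_X_pow, if_neg]
  rintro rfl
  exact hn rfl

lemma congr_residue {a b : ℕ} {F : R⟦X⟧} (hF : SupportedMod ℓ a F) (hab : a ≡ b [MOD ℓ]) :
    SupportedMod ℓ b F :=
  fun n hn => hF n fun hna => hn (hna.trans hab)

lemma ext {F G : R⟦X⟧} (hF : SupportedMod ℓ 0 F) (hG : SupportedMod ℓ 0 G)
    (h : ∀ s, coeff (ℓ * s) F = coeff (ℓ * s) G) : F = G := by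
  ext n
  by_cases hn : n ≡ 0 [MOD ℓ]
  · obtain ⟨s, rfl⟩ := Nat.modEq_zero_iff_dvd.mp hn
    exact h s
  · rw [hF n hn, hG n hn]

lemma psComp {A h : R⟦X⟧} (hA : SupportedMod ℓ 0 A) (hh : SupportedMod ℓ 1 h) :
    SupportedMod ℓ 0 (psComp A h) := by
  intro n hn
  rw [_root_.psComp, coeff_mk]
  refine sum_eq_zero fun k _ => ?_
  by_cases hk : k ≡ 0 [MOD ℓ]
  · rw [(hh.pow k).congr_residue (by rwa [one_mul]) n hn, mul_zero]
  · rw [hA k hk, zero_mul]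

end SupportedMod

lemma coeff_mul_psComp {h : R⟦X⟧} (hh : constantCoeff h = 0) (A G : R⟦X⟧) (N : ℕ) :
    coeff N (G * psComp A h) = ∑ k ∈ range (N + 1), coeff k A * coeff N (G * h ^ k) := by
  have hcomp : ∀ m ≤ N,
      coeff m (psComp A h) = ∑ k ∈ range (N + 1), coeff k A * coeff m (h ^ k) := by
    intro m hm
    rw [psComp, coeff_mk]
    refine sum_subset (range_subset_range.mpr (by omega)) fun k _ hkm => ?_
    rw [← one_mul (h ^ k), coeff_mul_pow_of_lt hh 1 (by simpa using hkm), mul_zero]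
  rw [coeff_mul, sum_congr rfl fun p hp => by
    rw [hcomp p.2 (HasAntidiagonal.antidiagonal.snd_le hp), mul_sum], sum_comm]
  refine sum_congr rfl fun k _ => ?_
  rw [coeff_mul, mul_sum]
  exact sum_congr rfl fun p _ => mul_left_comm _ _ _

lemma sum_range_eq_sum_range_mul {M : Type*} [AddCommMonoid M] {ℓ N S : ℕ} (hℓ : 0 < ℓ)
    (hNS : N ≤ ℓ * S) {F : ℕ → M} (hdvd : ∀ i, ¬ ℓ ∣ i → F i = 0) (hN : ∀ i, N < i → F i = 0) :
    ∑ i ∈ range (N + 1), F i = ∑ j ∈ range (S + 1), F (ℓ * j) := by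
  refine (sum_bij_ne_zero (fun j _ _ => ℓ * j) (fun j _ hj => ?_)
    (fun _ _ _ _ _ _ h => Nat.eq_of_mul_eq_mul_left hℓ h) (fun i _ hi => ?_)
    (fun _ _ _ => rfl)).symm
  · exact mem_range.mpr (Nat.lt_succ_of_le (not_lt.mp (mt (hN _) hj)))
  · obtain ⟨j, rfl⟩ := not_not.mp (mt (hdvd i) hi)
    have hjS : ℓ * j ≤ ℓ * S := (not_lt.mp (mt (hN _) hi)).trans hNS
    exact ⟨j, mem_range.mpr (Nat.lt_succ_of_le (Nat.le_of_mul_le_mul_left hjS hℓ)), hi, rfl⟩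

lemma coeff_mul_psComp_of_supportedMod {ℓ N S : ℕ} (hℓ : 0 < ℓ) (hNS : N ≤ ℓ * S)
    {A h : R⟦X⟧} (hA : SupportedMod ℓ 0 A) (hh : constantCoeff h = 0) (G : R⟦X⟧) :
    coeff N (G * psComp A h) =
      ∑ j ∈ range (S + 1), coeff (ℓ * j) A * coeff N (G * h ^ (ℓ * j)) := by
  rw [coeff_mul_psComp hh]
  refine sum_range_eq_sum_range_mul hℓ hNS (fun i hi => ?_) (fun i hi => ?_)
  · rw [supportedMod_zero_iff.mp hA i hi, zero_mul]
  · rw [coeff_mul_pow_of_lt hh G hi, mul_zero]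

theorem X_pow_mul_psComp_eq_pow_iff {ℓ : ℕ} (hℓ : 0 < ℓ) {A h : R⟦X⟧} (hA : SupportedMod ℓ 0 A)
    (hh : SupportedMod ℓ 1 h) (hh0 : constantCoeff h = 0) :
    X ^ ℓ * psComp A h = h ^ ℓ ↔ ∀ s, ∑ j ∈ range (s + 1),
      coeff (ℓ * j) A * coeff (ℓ * s) (h ^ (ℓ * j)) = coeff (ℓ * (s + 1)) (h ^ ℓ) := by
  have hshift : ∀ s, coeff (ℓ * (s + 1)) (X ^ ℓ * psComp A h)
      = ∑ j ∈ range (s + 1), coeff (ℓ * j) A * coeff (ℓ * s) (h ^ (ℓ * j)) := by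
    intro s
    rw [mul_add_one, coeff_X_pow_mul]
    simpa using coeff_mul_psComp_of_supportedMod hℓ le_rfl hA hh0 1
  refine ⟨fun heq s => by rw [← hshift, heq], fun hsys => ?_⟩
  have hlhs : SupportedMod ℓ 0 (X ^ ℓ * psComp A h) :=
    ((SupportedMod.X_pow ℓ).mul (hA.psComp hh)).congr_residue (by simp)
  have hrhs : SupportedMod ℓ 0 (h ^ ℓ) :=
    (hh.pow ℓ).congr_residue (by simp)
  refine hlhs.ext hrhs fun s => ?_
  cases s with
  | zero =>
    rw [mul_zero, coeff_X_pow_mul', if_neg hℓ.not_ge, ← one_mul (h ^ ℓ),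
      coeff_mul_pow_of_lt hh0 1 hℓ]
  | succ s => rw [hshift, hsys]

end PowerSeries

section Triangular

variable {K : Type*} [Field K] (M : ℕ → ℕ → K) (c : ℕ → K)

noncomputable def triangularSolve : ℕ → K
  | s => (c s - ∑ j : Fin s, triangularSolve j * M s j) / M s s

variable {M}

theorem sum_triangularSolve_mul (hM : ∀ s, M s s ≠ 0) (s : ℕ) :
    ∑ j ∈ range (s + 1), triangularSolve M c j * M s j = c s := by
  rw [sum_range_succ, ← Fin.sum_univ_eq_sum_range, triangularSolve, div_mul_cancel₀ _ (hM s),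
    add_sub_cancel]

theorem eq_of_sum_triangular_eq (hM : ∀ s, M s s ≠ 0) {a b : ℕ → K}
    (hab : ∀ s, ∑ j ∈ range (s + 1), a j * M s j = ∑ j ∈ range (s + 1), b j * M s j) :
    a = b := by
  funext s
  induction s using Nat.strong_induction_on with
  | _ s ih =>
    have hlow : ∑ j ∈ range s, a j * M s j = ∑ j ∈ range s, b j * M s j :=
      sum_congr rfl fun j hj => by rw [ih j (mem_range.mp hj)]
    have hs := hab s
    rw [sum_range_succ, sum_range_succ, hlow, add_right_inj] at hs
    exact mul_right_cancel₀ (hM s) hs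

end Triangular

theorem existsUnique_aSequence {K : Type*} [Field K] {ℓ : ℕ} (hℓ : 0 < ℓ) {h : K⟦X⟧}
    (hh : SupportedMod ℓ 1 h) (hh0 : constantCoeff h = 0) (hh1 : coeff 1 h ≠ 0) :
    ∃! A : K⟦X⟧, SupportedMod ℓ 0 A ∧ X ^ ℓ * psComp A h = h ^ ℓ := by
  let M : ℕ → ℕ → K := fun s j => coeff (ℓ * s) (h ^ (ℓ * j))
  have hM : ∀ s, M s s ≠ 0 := fun s => by
    simpa only [M, coeff_pow_self_of_constantCoeff_eq_zero hh0] using pow_ne_zero _ hh1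
  let a := triangularSolve M fun s => coeff (ℓ * (s + 1)) (h ^ ℓ)
  let A : K⟦X⟧ := mk fun n => if ℓ ∣ n then a (n / ℓ) else 0
  have hAcoeff : ∀ j, coeff (ℓ * j) A = a j := by simp [A, hℓ.ne']
  have hA : SupportedMod ℓ 0 A := supportedMod_zero_iff.mpr fun n hn => by simp [A, hn]
  have hAeq : X ^ ℓ * psComp A h = h ^ ℓ :=
    (X_pow_mul_psComp_eq_pow_iff hℓ hA hh hh0).mpr fun s => by
      simpa only [hAcoeff] using sum_triangularSolve_mul _ hM s
  refine ⟨A, ⟨hA, hAeq⟩, fun B ⟨hB, hBeq⟩ => hB.ext hA fun s => ?_⟩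
  refine congrFun (eq_of_sum_triangular_eq (a := fun j => coeff (ℓ * j) B)
    (b := fun j => coeff (ℓ * j) A) hM fun s => ?_) s
  rw [(X_pow_mul_psComp_eq_pow_iff hℓ hB hh hh0).mp hBeq s,
    (X_pow_mul_psComp_eq_pow_iff hℓ hA hh hh0).mp hAeq s]

section RiordanArray

variable {R : Type*} [CommRing R] {ℓ : ℕ} {g : R⟦X⟧} {f : ℕ → R⟦X⟧}

variable (ℓ g f) in
noncomputable def mrColumn (k : ℕ) : R⟦X⟧ :=
  g * (∏ i ∈ range (k % ℓ), f i) * (∏ i ∈ range ℓ, f i) ^ (k / ℓ)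

lemma mrEntry_eq_coeff_mrColumn (n k : ℕ) : mrEntry ℓ g f n k = coeff n (mrColumn ℓ g f k) :=
  rfl

lemma mrColumn_add_mul (hℓ : 0 < ℓ) (k j : ℕ) :
    mrColumn ℓ g f (k + j * ℓ) = mrColumn ℓ g f k * (∏ i ∈ range ℓ, f i) ^ j := by
  rw [mrColumn, mrColumn, Nat.add_mul_mod_self_right, Nat.add_mul_div_right _ _ hℓ, pow_add,
    ← mul_assoc]

theorem mrEntry_eq_sum_aSequence (hℓ : 0 < ℓ) {h A : R⟦X⟧} (hh0 : constantCoeff h = 0)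
    (hhl : h ^ ℓ = ∏ i ∈ range ℓ, f i) (hA : SupportedMod ℓ 0 A)
    (hAeq : X ^ ℓ * psComp A h = h ^ ℓ) {n k : ℕ} (hn : ℓ ≤ n) (hk : ℓ ≤ k) :
    mrEntry ℓ g f n k = ∑ j ∈ range (n + 1),
      coeff (ℓ * j) A * mrEntry ℓ g f (n - ℓ) (k + j * ℓ - ℓ) := by
  obtain ⟨N, rfl⟩ := Nat.exists_eq_add_of_le' hn
  obtain ⟨k, rfl⟩ := Nat.exists_eq_add_of_le' hk
  have hcol : ∀ j, mrColumn ℓ g f (k + j * ℓ) = mrColumn ℓ g f k * h ^ (ℓ * j) := fun j => by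
    rw [mrColumn_add_mul hℓ, pow_mul, hhl]
  have hNS : N ≤ ℓ * (N + ℓ) := by
    rw [mul_add]
    exact le_add_right (Nat.le_mul_of_pos_left N hℓ)
  calc mrEntry ℓ g f (N + ℓ) (k + ℓ)
      = coeff (N + ℓ) (X ^ ℓ * (mrColumn ℓ g f k * psComp A h)) := by
        rw [mrEntry_eq_coeff_mrColumn, show k + ℓ = k + 1 * ℓ by rw [one_mul], hcol, mul_one,
          ← hAeq, mul_left_comm]
    _ = ∑ j ∈ range (N + ℓ + 1), coeff (ℓ * j) A * coeff N (mrColumn ℓ g f k * h ^ (ℓ * j)) := by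
        rw [coeff_X_pow_mul, coeff_mul_psComp_of_supportedMod hℓ hNS hA hh0]
    _ = _ := sum_congr rfl fun j _ => by
        rw [Nat.add_sub_cancel, add_right_comm, Nat.add_sub_cancel, mrEntry_eq_coeff_mrColumn, hcol]

end RiordanArray

theorem stmt10_general {K : Type*} [Field K] (ℓ : ℕ) (hℓ : 2 ≤ ℓ)
    (g : K⟦X⟧) (f : ℕ → K⟦X⟧)
    (h : K⟦X⟧) (hhs : ∀ n, n % ℓ ≠ 1 → coeff n h = 0) (hh1 : coeff 1 h ≠ 0)
    (hhl : h ^ ℓ = ∏ i ∈ Finset.range ℓ, f i)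
    (d : ℕ → ℕ → K) (hd : ∀ n k, d n k = mrEntry ℓ g f n k) :
    (∃! A : K⟦X⟧, (∀ n, ¬ (ℓ ∣ n) → coeff n A = 0) ∧ X ^ ℓ * psComp A h = h ^ ℓ) ∧
    ∀ A : K⟦X⟧, (∀ n, ¬ (ℓ ∣ n) → coeff n A = 0) → X ^ ℓ * psComp A h = h ^ ℓ →
      ∀ n k, ℓ ≤ n → ℓ ≤ k →
        d n k = ∑ j ∈ Finset.range (n + 1),
          coeff (ℓ * j) A * d (n - ℓ) (k + j * ℓ - ℓ) := by
  have hℓ0 : 0 < ℓ := by omega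
  have hh : SupportedMod ℓ 1 h := by
    simpa only [SupportedMod, Nat.ModEq, Nat.mod_eq_of_lt hℓ] using hhs
  have hh0 : constantCoeff h = 0 := by
    simpa using hh 0 (by simp [Nat.ModEq, Nat.mod_eq_of_lt hℓ])
  simp only [← supportedMod_zero_iff, hd]
  exact ⟨existsUnique_aSequence hℓ0 hh hh0 hh1,
    fun A hA hAeq n k hn hk => mrEntry_eq_sum_aSequence hℓ0 hh0 hhl hA hAeq hn hk⟩

/-- Existence and uniqueness of the `A`-sequence of a multiple Riordan array, and the
recurrence it induces. -/
theorem stmt10 {K : Type*} [Field K] [CharZero K] (ℓ : ℕ) (hℓ : 2 ≤ ℓ)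
    (g : K⟦X⟧) (f : ℕ → K⟦X⟧)
    (hg : ∀ n, ¬ (ℓ ∣ n) → coeff n g = 0) (hg0 : constantCoeff g ≠ 0)
    (hf : ∀ i < ℓ, ∀ n, n % ℓ ≠ 1 → coeff n (f i) = 0)
    (hf1 : ∀ i < ℓ, coeff 1 (f i) ≠ 0)
    (h : K⟦X⟧) (hhs : ∀ n, n % ℓ ≠ 1 → coeff n h = 0) (hh1 : coeff 1 h ≠ 0)
    (hhl : h ^ ℓ = ∏ i ∈ Finset.range ℓ, f i)
    (d : ℕ → ℕ → K) (hd : ∀ n k, d n k = mrEntry ℓ g f n k) :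
    (∃! A : K⟦X⟧, (∀ n, ¬ (ℓ ∣ n) → coeff n A = 0) ∧ X ^ ℓ * psComp A h = h ^ ℓ) ∧
    ∀ A : K⟦X⟧, (∀ n, ¬ (ℓ ∣ n) → coeff n A = 0) → X ^ ℓ * psComp A h = h ^ ℓ →
      ∀ n k, ℓ ≤ n → ℓ ≤ k →
        d n k = ∑ j ∈ Finset.range (n + 1),
          coeff (ℓ * j) A * d (n - ℓ) (k + j * ℓ - ℓ) :=
  stmt10_general ℓ hℓ g f h hhs hh1 hhl d hd
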